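/- Let M be a nonzero finitely generated module over a noetherian local ring (A, m) and N a finitely generated A-module such that M ⊗_A N ≅ M. Then N is cyclic, i.e., generated by a single element. -/

import Mathlib

open scoped TensorProduct

/-- Let `M` be a nonzero finitely generated module over a noetherian local
ring `(A, m)` and `N` a finitely generated `A`-module such that `M ⊗_A N ≅ M`.  Then `N` is
cyclic, i.e. generated by a single element. -/
theorem stmt_5
    (A : Type) [CommRing A] [IsNoetherianRing A] [IsLocalRing A]
    (M N : Type) [AddCommGroup M] [Module A M] [AddCommGroup N] [Module A N]
    [Module.Finite A M] [Module.Finite A N] [Nontrivial M]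
    (e : Nonempty ((M ⊗[A] N) ≃ₗ[A] M)) :
    ∃ x : N, Submodule.span A {x} = ⊤ := by
  obtain ⟨e⟩ := e
  let k := IsLocalRing.ResidueField A
  -- base change the equivalence to k
  let E1 : k ⊗[A] (M ⊗[A] N) ≃ₗ[k] k ⊗[A] M := e.baseChange A k _ _
  let E2 : (k ⊗[A] M) ⊗[k] (k ⊗[A] N) ≃ₗ[k] k ⊗[A] M :=
    (TensorProduct.AlgebraTensorModule.distribBaseChange A k M N).symm ≪≫ₗ E1
  have hMk : Nontrivial (k ⊗[A] M) := by
    rw [← not_subsingleton_iff_nontrivial, IsLocalRing.subsingleton_tensorProduct (R := A)]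
    exact not_subsingleton M
  have hr : Module.finrank k (k ⊗[A] M) ≠ 0 :=
    Module.finrank_pos.ne'
  have hdim : Module.finrank k (k ⊗[A] N) = 1 := by
    have := E2.finrank_eq
    rw [Module.finrank_tensorProduct] at this
    have h1 : Module.finrank k (k ⊗[A] M) * Module.finrank k (k ⊗[A] N)
        = Module.finrank k (k ⊗[A] M) * 1 := by simpa using this
    exact Nat.eq_of_mul_eq_mul_left (Nat.pos_of_ne_zero hr) h1
  let b : Module.Basis Unit k (k ⊗[A] N) := Module.basisUnique Unit hdim
  obtain ⟨x, hx⟩ := TensorProduct.mk_surjective A N k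
    IsLocalRing.residue_surjective (b default)
  refine ⟨x, ?_⟩
  have := IsLocalRing.span_eq_top_of_tmul_eq_basis (R := A) (f := fun _ : Unit => x) b
    (fun _ => hx)
  simpa [Set.range_const] using this
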